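/- arXiv:2407.16407 — 4 statements merged into one kernel-verified Lean document; each statement's English description precedes it below -/
import Mathlib

section
/- Let (X, 𝔄, μ) be a measure space, H a real Hilbert space, ι : H → L²(μ) an injective continuous linear map with dense range, and k : X → H a family of feature maps with the reproducing property that, for every ψ ∈ H, the function x ↦ ⟪ψ, k(x)⟫_H is a representative of ιψ ∈ L²(μ). Let g : X → ℝ be a square-integrable measurable function such that the H-valued map x ↦ g(x) • k(x) is Bochner integrable with respect to μ. If ∫_X ⟪k(x), k(y)⟫_H g(y) dμ(y) = 0 for every x ∈ X, then g = 0 μ-almost everywhere. -/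
/-!
Set `w := ∫ g(y) • k(y) dμ(y)`, a Bochner integral taken in the completion of `H` since `H`
need not be complete. The hypothesis says `⟪k x, w⟫ = 0` for every `x`, so
`‖w‖² = ∫ g(y) ⟪k y, w⟫ dμ(y) = 0`, i.e. `∫ ⟪ψ, k y⟫ g(y) dμ(y) = ⟪ψ, w⟫ = 0` for every `ψ ∈ H`.
By the reproducing property this integral is `⟪ι ψ, g⟫` in `L²(μ)`, and `g`, being orthogonal
to the dense range of `ι`, vanishes.
-/

open MeasureTheory RealInnerProductSpace UniformSpace

theorem MeasureTheory.Integrable.coe_completion {X : Type*} [MeasurableSpace X] {μ : Measure X}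
    {E : Type*} [NormedAddCommGroup E] [NormedSpace ℝ E] {f : X → E} (hf : Integrable f μ) :
    Integrable (fun x => (f x : Completion E)) μ :=
  (Completion.toComplL : E →L[ℝ] Completion E).integrable_comp hf

section FeatureIntegral

variable {X : Type*} [MeasurableSpace X] {μ : Measure X}
  {H : Type*} [NormedAddCommGroup H] [InnerProductSpace ℝ H] {g : X → ℝ} {k : X → H}

theorem inner_coe_integral_coe_completion_smul (hgk : Integrable (fun y => g y • k y) μ)
    (ψ : H) :
    ⟪(ψ : Completion H), ∫ y, ((g y • k y : H) : Completion H) ∂μ⟫ = ∫ y, ⟪ψ, k y⟫ * g y ∂μ := by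
  rw [← integral_inner hgk.coe_completion]
  simp only [Completion.inner_coe, real_inner_smul_right, mul_comm]

theorem integral_inner_mul_eq_zero_of_forall_integral_inner_mul_eq_zero
    (hgk : Integrable (fun y => g y • k y) μ) (h : ∀ x, ∫ y, ⟪k x, k y⟫ * g y ∂μ = 0) (ψ : H) :
    ∫ y, ⟪ψ, k y⟫ * g y ∂μ = 0 := by
  set w : Completion H := ∫ y, ((g y • k y : H) : Completion H) ∂μ
  have hkw (y : X) : ⟪w, ((g y • k y : H) : Completion H)⟫ = 0 := by
    rw [Completion.coe_smul, real_inner_smul_right, real_inner_comm,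
      inner_coe_integral_coe_completion_smul hgk, h, mul_zero]
  have hw : w = 0 := by
    rw [← inner_self_eq_zero (𝕜 := ℝ), ← integral_inner hgk.coe_completion]
    simp only [hkw, integral_zero]
  rw [← inner_coe_integral_coe_completion_smul hgk]
  change ⟪(ψ : Completion H), w⟫ = 0
  rw [hw, inner_zero_right]

end FeatureIntegral

theorem MeasureTheory.L2.real_inner_eq_integral_mul_of_ae_eq {X : Type*} [MeasurableSpace X]
    {μ : Measure X} {u v : Lp ℝ 2 μ} {f g : X → ℝ} (hu : u =ᵐ[μ] f) (hv : v =ᵐ[μ] g) :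
    ⟪u, v⟫ = ∫ x, f x * g x ∂μ := by
  rw [L2.inner_def]
  refine integral_congr_ae ?_
  filter_upwards [hu, hv] with x hux hvx
  rw [hux, hvx, real_inner_eq_re_inner, RCLike.inner_apply]
  simp [mul_comm]

theorem feature_maps_suffice_as_test_functions_general
    {X : Type*} [MeasurableSpace X] (μ : Measure X)
    {H : Type*} [NormedAddCommGroup H] [InnerProductSpace ℝ H]
    (ι : H →L[ℝ] Lp ℝ 2 μ) (hι_dense : DenseRange ι)
    (k : X → H)
    (hrepr : ∀ ψ : H, (ι ψ : X → ℝ) =ᵐ[μ] fun x => ⟪ψ, k x⟫)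
    (g : X → ℝ) (hg_sq : MemLp g 2 μ)
    (hg_int : Integrable (fun x => g x • k x) μ)
    (h : ∀ x : X, ∫ y, ⟪k x, k y⟫ * g y ∂μ = 0) :
    g =ᵐ[μ] 0 := by
  have hG : hg_sq.toLp g = 0 := hι_dense.eq_zero_of_inner_right ℝ fun ψ => by
    rw [L2.real_inner_eq_integral_mul_of_ae_eq (hrepr ψ) hg_sq.coeFn_toLp,
      integral_inner_mul_eq_zero_of_forall_integral_inner_mul_eq_zero hg_int h ψ]
  have hg_ae : (hg_sq.toLp g : X → ℝ) =ᵐ[μ] g := hg_sq.coeFn_toLp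
  rw [hG] at hg_ae
  exact hg_ae.symm.trans (Lp.coeFn_zero ℝ 2 μ)

/-- **Proposition 3**: if an RKHS `H` with feature maps `k x` embeds continuously,
injectively and densely into `L²(μ)`, then a square-integrable function `g` whose
integral against every feature map vanishes must vanish almost everywhere; i.e. the
canonical feature maps suffice as test functions. -/
theorem feature_maps_suffice_as_test_functions
    {X : Type*} [MeasurableSpace X] (μ : Measure X)
    {H : Type*} [NormedAddCommGroup H] [InnerProductSpace ℝ H]
    (ι : H →L[ℝ] Lp ℝ 2 μ) (hι_inj : Function.Injective ι) (hι_dense : DenseRange ι)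
    (k : X → H)
    (hrepr : ∀ ψ : H, (ι ψ : X → ℝ) =ᵐ[μ] fun x => ⟪ψ, k x⟫)
    (g : X → ℝ) (hg_meas : Measurable g) (hg_sq : MemLp g 2 μ)
    (hg_int : Integrable (fun x => g x • k x) μ)
    (h : ∀ x : X, ∫ y, ⟪k x, k y⟫ * g y ∂μ = 0) :
    g =ᵐ[μ] 0 :=
  feature_maps_suffice_as_test_functions_general μ ι hι_dense k hrepr g hg_sq hg_int h
end

section
/- Let f : ℝ → ℝ be three times continuously differentiable with |f'''(t)| ≤ M for all t ∈ ℝ, where M ≥ 0. Then for every z ∈ ℝ and a ∈ ℝ, the function w ↦ f(z + a w) is integrable with respect to the standard Gaussian measure γ = N(0,1) on ℝ, and | ∫_ℝ f(z + a w) dγ(w) − f(z) − (a²/2) f''(z) | ≤ (M |a|³ / 6) · ∫_ℝ |w|³ dγ(w) = (√2 · M |a|³) / (3 √π). -/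
/-!
Taylor's theorem with Lagrange remainder gives
`f (z + a w) = f z + f' z · a w + f'' z · (a w)² / 2 + R(w)` with `|R(w)| ≤ M |a|³ |w|³ / 6`.
Integrating against a centred law with a finite third moment kills the linear term, turns `w²`
into the second moment and bounds the remainder by the third absolute moment. For `N(0, 1)`
the moments are `0` and `1`, and the substitution `x ↦ |x|` reduces the third absolute moment
to a Gamma integral: `∫ |w|³ dγ = 2^(3/2) Γ(2) / √π`.
-/

open MeasureTheory ProbabilityTheory Real
open scoped NNReal

theorem abs_sub_sum_iteratedDeriv_le {f : ℝ → ℝ} {n : ℕ} (hf : ContDiff ℝ (n + 1) f) {M : ℝ}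
    (hM : ∀ t, |iteratedDeriv (n + 1) f t| ≤ M) (x₀ x : ℝ) :
    |f x - ∑ k ∈ Finset.range (n + 1), iteratedDeriv k f x₀ * (x - x₀) ^ k / k.factorial|
      ≤ M * |x - x₀| ^ (n + 1) / (n + 1).factorial := by
  rcases eq_or_ne x₀ x with rfl | hx
  · simp [Finset.sum_range_succ']
  obtain ⟨x', -, hx'⟩ := taylor_mean_remainder_lagrange_iteratedDeriv hx hf.contDiffOn
  have htaylor : taylorWithinEval f n (Set.uIcc x₀ x) x₀ x
      = ∑ k ∈ Finset.range (n + 1), iteratedDeriv k f x₀ * (x - x₀) ^ k / k.factorial := by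
    rw [taylor_within_apply]
    refine Finset.sum_congr rfl fun k hk => ?_
    rw [iteratedDerivWithin_eq_iteratedDeriv (uniqueDiffOn_uIcc hx)
      (hf.contDiffAt.of_le (by exact_mod_cast (Finset.mem_range.1 hk).le)) Set.left_mem_uIcc,
      smul_eq_mul]
    ring
  rw [← htaylor, hx', abs_div, abs_mul, abs_pow, Nat.abs_cast]
  gcongr
  exact hM x'

section
variable {μ : Measure ℝ} {f : ℝ → ℝ} {M : ℝ}

theorem abs_comp_add_mul_sub_quadratic_le (hf : ContDiff ℝ 3 f)
    (hf3 : ∀ t, |iteratedDeriv 3 f t| ≤ M) (z a w : ℝ) :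
    |f (z + a * w) - (f z + deriv f z * a * w + iteratedDeriv 2 f z * a ^ 2 / 2 * w ^ 2)|
      ≤ M * |a| ^ 3 / 6 * |w| ^ 3 := by
  have h := abs_sub_sum_iteratedDeriv_le (n := 2) hf hf3 z (z + a * w)
  simp only [Finset.sum_range_succ, Finset.sum_range_zero, iteratedDeriv_zero, iteratedDeriv_one,
    add_sub_cancel_left, abs_mul] at h
  convert h using 2 <;> norm_num [Nat.factorial] <;> ring

theorem integrable_abs_pow_three (hμ : MemLp id 3 μ) : Integrable (fun w => |w| ^ 3) μ := by
  simpa using hμ.integrable_norm_pow (p := 3) (by norm_num)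

theorem integrable_id_of_memLp_three [IsFiniteMeasure μ] (hμ : MemLp id 3 μ) :
    Integrable (fun w => w) μ :=
  memLp_one_iff_integrable.1 (hμ.mono_exponent (by norm_num))

theorem integrable_sq_of_memLp_three [IsFiniteMeasure μ] (hμ : MemLp id 3 μ) :
    Integrable (fun w => w ^ 2) μ :=
  (hμ.mono_exponent (p := 2) (by norm_num)).integrable_sq

theorem integrable_quadratic [IsFiniteMeasure μ] (hμ : MemLp id 3 μ) (c₀ c₁ c₂ : ℝ) :
    Integrable (fun w => c₀ + c₁ * w + c₂ * w ^ 2) μ :=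
  ((integrable_const c₀).add ((integrable_id_of_memLp_three hμ).const_mul c₁)).add
    ((integrable_sq_of_memLp_three hμ).const_mul c₂)

theorem integral_quadratic [IsProbabilityMeasure μ] (hμ : MemLp id 3 μ) (hmean : ∫ w, w ∂μ = 0)
    (c₀ c₁ c₂ : ℝ) : ∫ w, (c₀ + c₁ * w + c₂ * w ^ 2) ∂μ = c₀ + c₂ * ∫ w, w ^ 2 ∂μ := by
  have h1 := (integrable_id_of_memLp_three hμ).const_mul c₁
  have h2 := (integrable_sq_of_memLp_three hμ).const_mul c₂
  rw [integral_add ((integrable_const c₀).fun_add h1) h2, integral_add (integrable_const c₀) h1,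
    integral_const_mul, integral_const_mul, hmean, integral_const]
  simp

theorem integrable_comp_add_mul_sub_quadratic (hμ : MemLp id 3 μ) (hf : ContDiff ℝ 3 f)
    (hf3 : ∀ t, |iteratedDeriv 3 f t| ≤ M) (z a : ℝ) :
    Integrable (fun w => f (z + a * w)
      - (f z + deriv f z * a * w + iteratedDeriv 2 f z * a ^ 2 / 2 * w ^ 2)) μ :=
  ((integrable_abs_pow_three hμ).const_mul _).mono' (by fun_prop)
    (ae_of_all _ fun w => abs_comp_add_mul_sub_quadratic_le hf hf3 z a w)

theorem integrable_comp_add_mul [IsProbabilityMeasure μ] (hμ : MemLp id 3 μ)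
    (hf : ContDiff ℝ 3 f) (hf3 : ∀ t, |iteratedDeriv 3 f t| ≤ M) (z a : ℝ) :
    Integrable (fun w => f (z + a * w)) μ :=
  ((integrable_comp_add_mul_sub_quadratic hμ hf hf3 z a).add
    (integrable_quadratic hμ _ _ _)).congr (ae_of_all _ fun _ => sub_add_cancel _ _)

theorem abs_integral_comp_add_mul_sub_le [IsProbabilityMeasure μ] (hμ : MemLp id 3 μ)
    (hmean : ∫ w, w ∂μ = 0) (hf : ContDiff ℝ 3 f) (hf3 : ∀ t, |iteratedDeriv 3 f t| ≤ M) (z a : ℝ) :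
    |∫ w, f (z + a * w) ∂μ - f z - a ^ 2 / 2 * iteratedDeriv 2 f z * ∫ w, w ^ 2 ∂μ|
      ≤ M * |a| ^ 3 / 6 * ∫ w, |w| ^ 3 ∂μ := by
  have hP : ∫ w, (f z + deriv f z * a * w + iteratedDeriv 2 f z * a ^ 2 / 2 * w ^ 2) ∂μ
      = f z + a ^ 2 / 2 * iteratedDeriv 2 f z * ∫ w, w ^ 2 ∂μ := by
    rw [integral_quadratic hμ hmean]
    ring
  calc _ = |∫ w, (f (z + a * w)
          - (f z + deriv f z * a * w + iteratedDeriv 2 f z * a ^ 2 / 2 * w ^ 2)) ∂μ| := by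
        rw [integral_sub (integrable_comp_add_mul hμ hf hf3 z a) (integrable_quadratic hμ _ _ _),
          hP, sub_sub]
    _ ≤ ∫ w, M * |a| ^ 3 / 6 * |w| ^ 3 ∂μ :=
        abs_integral_le_integral_abs.trans (integral_mono
          (integrable_comp_add_mul_sub_quadratic hμ hf hf3 z a).abs
          ((integrable_abs_pow_three hμ).const_mul _)
          fun w => abs_comp_add_mul_sub_quadratic_le hf hf3 z a w)
    _ = _ := integral_const_mul _ _
end

theorem integral_abs_rpow_gaussianReal {v : ℝ≥0} (hv : v ≠ 0) {q : ℝ} (hq : -1 < q) :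
    ∫ x, |x| ^ q ∂gaussianReal 0 v = (2 * v) ^ (q / 2) * Gamma ((q + 1) / 2) / √π := by
  have hv' : (0 : ℝ) < 2 * v := by positivity
  have hb : (0 : ℝ) < (2 * (v : ℝ))⁻¹ := inv_pos.2 hv'
  have hradial : ∫ x, |x| ^ q * rexp (-(2 * v : ℝ)⁻¹ * |x| ^ (2 : ℝ))
      = (2 * v) ^ ((q + 1) / 2) * Gamma ((q + 1) / 2) := by
    rw [integral_comp_abs (f := fun x => x ^ q * rexp (-(2 * v : ℝ)⁻¹ * x ^ (2 : ℝ))),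
      integral_rpow_mul_exp_neg_mul_rpow two_pos hq hb, inv_rpow hv'.le, ← rpow_neg hv'.le]
    ring_nf
  have hsqrt : √(2 * π * v) = (2 * v) ^ (1 / 2 : ℝ) * √π := by
    rw [← sqrt_eq_rpow, ← sqrt_mul hv'.le]
    ring_nf
  rw [integral_gaussianReal_eq_integral_smul hv]
  simp_rw [gaussianPDFReal_def, smul_eq_mul]
  calc _ = (√(2 * π * v))⁻¹ * ∫ x, |x| ^ q * rexp (-(2 * v : ℝ)⁻¹ * |x| ^ (2 : ℝ)) := by
        rw [← integral_const_mul]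
        congr 1 with x
        rw [rpow_two, sq_abs]
        ring_nf
    _ = _ := by
        rw [hradial, hsqrt, show q / 2 = (q + 1) / 2 + -(1 / 2) by ring, rpow_add hv',
          rpow_neg hv'.le]
        ring

theorem integral_abs_pow_three_gaussianReal :
    ∫ x, |x| ^ 3 ∂gaussianReal 0 1 = 2 * √2 / √π := by
  have hpow : ∀ x : ℝ, |x| ^ 3 = |x| ^ (3 : ℝ) := fun x => by norm_cast
  simp_rw [hpow, integral_abs_rpow_gaussianReal one_ne_zero (by norm_num : (-1 : ℝ) < 3)]
  rw [NNReal.coe_one, mul_one, show (3 + 1) / 2 = (2 : ℝ) by norm_num, Gamma_two,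
    show (3 : ℝ) / 2 = 1 + 1 / 2 by norm_num, rpow_add two_pos, rpow_one, ← sqrt_eq_rpow, mul_one]

theorem gaussian_smoothing_second_order_general
    (f : ℝ → ℝ) (hf : ContDiff ℝ 3 f)
    (M : ℝ) (hf3 : ∀ t : ℝ, |iteratedDeriv 3 f t| ≤ M)
    (z a : ℝ) :
    Integrable (fun w => f (z + a * w)) (gaussianReal 0 1) ∧
    |(∫ w, f (z + a * w) ∂(gaussianReal 0 1)) - f z - (a ^ 2 / 2) * iteratedDeriv 2 f z|
      ≤ (M * |a| ^ 3 / 6) * ∫ w, |w| ^ 3 ∂(gaussianReal 0 1) ∧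
    (M * |a| ^ 3 / 6) * (∫ w, |w| ^ 3 ∂(gaussianReal 0 1)) =
      Real.sqrt 2 * M * |a| ^ 3 / (3 * Real.sqrt π) := by
  have hγ : MemLp id 3 (gaussianReal 0 1) := memLp_id_gaussianReal' 3 (by simp)
  have hmean : ∫ w, w ∂gaussianReal 0 1 = 0 := integral_id_gaussianReal
  have hvar : ∫ w, w ^ 2 ∂gaussianReal 0 1 = 1 := by
    rw [← variance_of_integral_eq_zero aemeasurable_id' hmean]
    simp
  refine ⟨integrable_comp_add_mul hγ hf hf3 z a, ?_, ?_⟩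
  · simpa [hvar] using abs_integral_comp_add_mul_sub_le hγ hmean hf hf3 z a
  · rw [integral_abs_pow_three_gaussianReal]
    field_simp
    ring

/-- Second-order Gaussian smoothing expansion: for `f` three times continuously
differentiable with third derivative bounded by `M`, the Gaussian smoothing
`∫ f(z + a w) dγ(w)` equals `f(z) + (a²/2) f''(z)` up to an error controlled by the
third absolute moment of the standard Gaussian, namely `(√2 · M · |a|³)/(3√π)`. -/
theorem gaussian_smoothing_second_order
    (f : ℝ → ℝ) (hf : ContDiff ℝ 3 f)
    (M : ℝ) (hM : 0 ≤ M) (hf3 : ∀ t : ℝ, |iteratedDeriv 3 f t| ≤ M)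
    (z a : ℝ) :
    Integrable (fun w => f (z + a * w)) (gaussianReal 0 1) ∧
    |(∫ w, f (z + a * w) ∂(gaussianReal 0 1)) - f z - (a ^ 2 / 2) * iteratedDeriv 2 f z|
      ≤ (M * |a| ^ 3 / 6) * ∫ w, |w| ^ 3 ∂(gaussianReal 0 1) ∧
    (M * |a| ^ 3 / 6) * (∫ w, |w| ^ 3 ∂(gaussianReal 0 1)) =
      Real.sqrt 2 * M * |a| ^ 3 / (3 * Real.sqrt π) :=
  gaussian_smoothing_second_order_general f hf M hf3 z a
end

section
/- Fix integers N, m, H ≥ 1, a time step Δt > 0, a nonempty compact set 𝕌 ⊆ ℝᵐ, a continuous function r : ℝᵐ → ℝ, a vector ℓ ∈ ℝᴺ, and matrices Â, B̂₁, …, B̂ₘ ∈ ℝ^{N×N}. For a node-wise control assignment u : {1,…,N} → 𝕌, let M(u) := Â + Σ_{s=1}^{m} B̂_s · diag(u(1)_s, …, u(N)_s), and assume that M(u) has nonnegative entries for every such u. Define vectors v_H, …, v_0 ∈ ℝᴺ by the backward recursion v_H = 0 and v_k(i) = ℓ(i)Δt + (Âᵀ v_{k+1})(i) + min_{w ∈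 𝕌} [ r(w)Δt + Σ_{s=1}^{m} w_s (B̂_sᵀ v_{k+1})(i) ] for k = H−1, …, 0 and i = 1, …, N (these minima exist by compactness and continuity). Then for every z₀ ∈ ℝᴺ with nonnegative entries, v₀ᵀ z₀ is the minimum, over all control sequences u⁰, …, u^{H−1} : {1,…,N} → 𝕌, of Σ_{k=0}^{H−1} Σ_{i=1}^{N} z_k(i) · (ℓ(i) + r(uᵏ(i))) Δt, where z_{k+1} := M(uᵏ) z_k; in particular this minimum is attained. -/
/-!
Pairing with the value vector, `z ↦ v k ⬝ᵥ z` is the cost-to-go of the measure `z` at step `k`.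
Since `M(u)ᵀ v = Âᵀ v + ∑ₛ diag(u·ₛ) B̂ₛᵀ v` splits node by node and `z ≥ 0`, the recursion makes
`v k ⬝ᵥ z ≤ stage cost + v (k+1) ⬝ᵥ M(u) z` for every admissible `u`, with equality for node-wise
minimisers of the Hamiltonian (which exist by compactness). Nonnegativity of `M(u)` keeps every
trajectory in the cone `z ≥ 0`, so telescoping along a trajectory bounds its cost from below by
`v 0 ⬝ᵥ z₀`, and the greedy trajectory attains the bound.
-/

open Matrix Finset

section Bellman

variable {X A : Type*} {S : Set X} {adm : Set A} {f : X → A → X} {cost : X → A → ℝ}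
  {V : ℕ → X → ℝ} {H : ℕ}

lemma trajectory_mem (hf : ∀ x ∈ S, ∀ a ∈ adm, f x a ∈ S) {a : ℕ → A} (ha : ∀ k, a k ∈ adm)
    {x : ℕ → X} (hx₀ : x 0 ∈ S) (hx : ∀ k, x (k + 1) = f (x k) (a k)) (k : ℕ) : x k ∈ S := by
  induction k with
  | zero => exact hx₀
  | succ k ih => exact hx k ▸ hf _ ih _ (ha k)

theorem isLeast_value_of_bellman (hf : ∀ x ∈ S, ∀ a ∈ adm, f x a ∈ S)
    (hV_H : ∀ x ∈ S, V H x = 0)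
    (hV_le : ∀ k < H, ∀ x ∈ S, ∀ a ∈ adm, V k x ≤ cost x a + V (k + 1) (f x a))
    (π : ℕ → X → A) (hπ : ∀ k, ∀ x ∈ S, π k x ∈ adm)
    (hπ_eq : ∀ k < H, ∀ x ∈ S, V k x = cost x (π k x) + V (k + 1) (f x (π k x)))
    {x₀ : X} (hx₀ : x₀ ∈ S) :
    IsLeast {c | ∃ a : ℕ → A, (∀ k, a k ∈ adm) ∧ ∃ x : ℕ → X, x 0 = x₀ ∧
      (∀ k, x (k + 1) = f (x k) (a k)) ∧ c = ∑ k ∈ range H, cost (x k) (a k)} (V 0 x₀) := by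
  have telescope : ∀ x : ℕ → X, x H ∈ S →
      V 0 (x 0) = ∑ k ∈ range H, (V k (x k) - V (k + 1) (x (k + 1))) := fun x hxH => by
    rw [sum_range_sub', hV_H _ hxH, sub_zero]
  constructor
  · let x : ℕ → X := fun k => Nat.rec x₀ (fun k xk => f xk (π k xk)) k
    have hxS : ∀ k, x k ∈ S := fun k => by
      induction k with
      | zero => exact hx₀
      | succ k ih => exact hf _ ih _ (hπ k _ ih)
    refine ⟨fun k => π k (x k), fun k => hπ k _ (hxS k), x, rfl, fun k => rfl, ?_⟩
    refine (telescope x (hxS H)).trans (sum_congr rfl fun k hk => ?_)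
    rw [hπ_eq k (mem_range.1 hk) _ (hxS k)]
    ring
  · rintro c ⟨a, ha, x, rfl, hx, rfl⟩
    have hxS := trajectory_mem hf ha hx₀ hx
    rw [telescope x (hxS H)]
    refine sum_le_sum fun k hk => ?_
    rw [hx k, sub_le_iff_le_add]
    exact hV_le k (mem_range.1 hk) _ (hxS k) _ (ha k)

end Bellman

section ControlledMatrix

variable {ι σ R : Type*} [Fintype ι] [DecidableEq ι] [Fintype σ] [CommSemiring R]

def controlledMatrix (A : Matrix ι ι R) (B : σ → Matrix ι ι R) (u : ι → σ → R) :
    Matrix ι ι R :=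
  A + ∑ s, B s * diagonal fun i => u i s

lemma transpose_controlledMatrix_mulVec (A : Matrix ι ι R) (B : σ → Matrix ι ι R)
    (u : ι → σ → R) (w : ι → R) (i : ι) :
    ((controlledMatrix A B u)ᵀ *ᵥ w) i = (Aᵀ *ᵥ w) i + ∑ s, u i s * ((B s)ᵀ *ᵥ w) i := by
  simp [controlledMatrix, transpose_sum, add_mulVec, sum_mulVec, ← mulVec_mulVec,
    mulVec_diagonal]

lemma dotProduct_controlledMatrix_mulVec (A : Matrix ι ι R) (B : σ → Matrix ι ι R)
    (u : ι → σ → R) (w z : ι → R) :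
    w ⬝ᵥ controlledMatrix A B u *ᵥ z =
      ∑ i, z i * ((Aᵀ *ᵥ w) i + ∑ s, u i s * ((B s)ᵀ *ᵥ w) i) := by
  rw [dotProduct_mulVec, ← mulVec_transpose, dotProduct_comm]
  simp only [dotProduct, transpose_controlledMatrix_mulVec]

end ControlledMatrix

lemma mulVec_nonneg {ι R : Type*} [Fintype ι] [Semiring R] [PartialOrder R] [IsOrderedRing R]
    {M : Matrix ι ι R} (hM : ∀ i j, 0 ≤ M i j) {z : ι → R} (hz : 0 ≤ z) : 0 ≤ M *ᵥ z :=
  fun i => dotProduct_nonneg_of_nonneg (hM i) hz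

section KernelHJB

variable {ι σ : Type*} [Fintype ι] [Fintype σ]
  (ℓ : ι → ℝ) (r : (σ → ℝ) → ℝ) (Δt : ℝ) (A : Matrix ι ι ℝ) (B : σ → Matrix ι ι ℝ)

def stageCost (z : ι → ℝ) (u : ι → σ → ℝ) : ℝ :=
  ∑ i, z i * (ℓ i + r (u i)) * Δt

/-- The paper's `𝒟(B̂ᵀ v)` at node `i` is the minimum of this function over `𝕌`. -/
def controlHamiltonian (v : ι → ℝ) (i : ι) (w : σ → ℝ) : ℝ :=
  r w * Δt + ∑ s, w s * ((B s)ᵀ *ᵥ v) i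

variable {ℓ r Δt A B}

lemma continuous_controlHamiltonian (hr : Continuous r) (v : ι → ℝ) (i : ι) :
    Continuous (controlHamiltonian r Δt B v i) := by
  unfold controlHamiltonian
  fun_prop

variable [DecidableEq ι]

lemma stageCost_add_dotProduct_controlledMatrix_mulVec (v z : ι → ℝ) (u : ι → σ → ℝ) :
    stageCost ℓ r Δt z u + v ⬝ᵥ controlledMatrix A B u *ᵥ z =
      ∑ i, z i * (ℓ i * Δt + (Aᵀ *ᵥ v) i + controlHamiltonian r Δt B v i (u i)) := by
  rw [stageCost, dotProduct_controlledMatrix_mulVec, ← sum_add_distrib]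
  refine sum_congr rfl fun i _ => ?_
  simp only [controlHamiltonian]
  ring

variable {U : Set (σ → ℝ)} {v v' z : ι → ℝ} {u : ι → σ → ℝ}

lemma dotProduct_le_stageCost_add
    (hv : ∀ i, v i = ℓ i * Δt + (Aᵀ *ᵥ v') i + sInf (controlHamiltonian r Δt B v' i '' U))
    (hU : IsCompact U) (hr : Continuous r) (hz : 0 ≤ z) (hu : ∀ i, u i ∈ U) :
    v ⬝ᵥ z ≤ stageCost ℓ r Δt z u + v' ⬝ᵥ controlledMatrix A B u *ᵥ z := by
  rw [stageCost_add_dotProduct_controlledMatrix_mulVec, dotProduct_comm]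
  refine sum_le_sum fun i _ => mul_le_mul_of_nonneg_left ?_ (hz i)
  rw [hv i]
  gcongr
  exact csInf_le ((hU.image (continuous_controlHamiltonian hr v' i)).bddBelow) ⟨u i, hu i, rfl⟩

lemma dotProduct_eq_stageCost_add
    (hv : ∀ i, v i = ℓ i * Δt + (Aᵀ *ᵥ v') i + sInf (controlHamiltonian r Δt B v' i '' U))
    (hu : ∀ i, sInf (controlHamiltonian r Δt B v' i '' U) = controlHamiltonian r Δt B v' i (u i)) :
    v ⬝ᵥ z = stageCost ℓ r Δt z u + v' ⬝ᵥ controlledMatrix A B u *ᵥ z := by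
  rw [stageCost_add_dotProduct_controlledMatrix_mulVec, dotProduct_comm]
  exact sum_congr rfl fun i _ => by rw [hv i, hu i]

end KernelHJB

theorem kernel_hjb_dynamic_programming_general
    (N m H : ℕ)
    (Δt : ℝ)
    (U : Set (Fin m → ℝ)) (hU_ne : U.Nonempty) (hU_cpt : IsCompact U)
    (r : (Fin m → ℝ) → ℝ) (hr : Continuous r)
    (ℓ : Fin N → ℝ)
    (Ahat : Matrix (Fin N) (Fin N) ℝ) (Bhat : Fin m → Matrix (Fin N) (Fin N) ℝ)
    (hM_nonneg : ∀ u : Fin N → Fin m → ℝ, (∀ i, u i ∈ U) → ∀ i j,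
      0 ≤ (Ahat + ∑ s : Fin m, Bhat s * Matrix.diagonal (fun i => u i s)) i j)
    (v : ℕ → Fin N → ℝ)
    (hvH : ∀ i, v H i = 0)
    (hvk : ∀ k, k < H → ∀ i,
      v k i = ℓ i * Δt + Ahatᵀ.mulVec (v (k + 1)) i +
        sInf ((fun w : Fin m → ℝ =>
          r w * Δt + ∑ s : Fin m, w s * (Bhat s)ᵀ.mulVec (v (k + 1)) i) '' U))
    (z₀ : Fin N → ℝ) (hz₀ : ∀ i, 0 ≤ z₀ i) :
    IsLeast
      {c : ℝ | ∃ u : ℕ → Fin N → (Fin m → ℝ),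
        (∀ k, ∀ i, u k i ∈ U) ∧
        ∃ z : ℕ → Fin N → ℝ, z 0 = z₀ ∧
          (∀ k, z (k + 1) =
            (Ahat + ∑ s : Fin m,
              Bhat s * Matrix.diagonal (fun i => u k i s)).mulVec (z k)) ∧
          c = ∑ k ∈ Finset.range H, ∑ i : Fin N, z k i * (ℓ i + r (u k i)) * Δt}
      (v 0 ⬝ᵥ z₀) := by
  have hmin : ∀ k i, ∃ w ∈ U, sInf (controlHamiltonian r Δt Bhat (v (k + 1)) i '' U) =
      controlHamiltonian r Δt Bhat (v (k + 1)) i w := fun k i =>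
    hU_cpt.exists_sInf_image_eq hU_ne (continuous_controlHamiltonian hr _ i).continuousOn
  choose uopt huopt_mem huopt_eq using hmin
  exact isLeast_value_of_bellman (S := {z | 0 ≤ z}) (adm := {u : Fin N → Fin m → ℝ | ∀ i, u i ∈ U})
    (f := fun z u => controlledMatrix Ahat Bhat u *ᵥ z) (cost := stageCost ℓ r Δt)
    (V := fun k z => v k ⬝ᵥ z)
    (fun _ hz u hu => mulVec_nonneg (hM_nonneg u hu) hz)
    (fun _ _ => by simp [funext hvH])
    (fun k hk _ hz _ hu => dotProduct_le_stageCost_add (hvk k hk) hU_cpt hr hz hu)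
    (fun k _ => uopt k) (fun k _ _ => huopt_mem k)
    (fun k hk _ _ => dotProduct_eq_stageCost_add (hvk k hk) (huopt_eq k)) hz₀

/-- Finite-dimensional dynamic programming identity underlying the discrete-time
Kernel HJB recursion: the backward value recursion computes the exact optimal value
`v₀ᵀ z₀` of the discretized measure-propagation optimal control problem, and the
minimum over control sequences is attained. -/
theorem kernel_hjb_dynamic_programming
    (N m H : ℕ) (hN : 1 ≤ N) (hm : 1 ≤ m) (hH : 1 ≤ H)
    (Δt : ℝ) (hΔt : 0 < Δt)
    (U : Set (Fin m → ℝ)) (hU_ne : U.Nonempty) (hU_cpt : IsCompact U)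
    (r : (Fin m → ℝ) → ℝ) (hr : Continuous r)
    (ℓ : Fin N → ℝ)
    (Ahat : Matrix (Fin N) (Fin N) ℝ) (Bhat : Fin m → Matrix (Fin N) (Fin N) ℝ)
    (hM_nonneg : ∀ u : Fin N → Fin m → ℝ, (∀ i, u i ∈ U) → ∀ i j,
      0 ≤ (Ahat + ∑ s : Fin m, Bhat s * Matrix.diagonal (fun i => u i s)) i j)
    (v : ℕ → Fin N → ℝ)
    (hvH : ∀ i, v H i = 0)
    (hvk : ∀ k, k < H → ∀ i,
      v k i = ℓ i * Δt + Ahatᵀ.mulVec (v (k + 1)) i +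
        sInf ((fun w : Fin m → ℝ =>
          r w * Δt + ∑ s : Fin m, w s * (Bhat s)ᵀ.mulVec (v (k + 1)) i) '' U))
    (z₀ : Fin N → ℝ) (hz₀ : ∀ i, 0 ≤ z₀ i) :
    IsLeast
      {c : ℝ | ∃ u : ℕ → Fin N → (Fin m → ℝ),
        (∀ k, ∀ i, u k i ∈ U) ∧
        ∃ z : ℕ → Fin N → ℝ, z 0 = z₀ ∧
          (∀ k, z (k + 1) =
            (Ahat + ∑ s : Fin m,
              Bhat s * Matrix.diagonal (fun i => u k i s)).mulVec (z k)) ∧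
          c = ∑ k ∈ Finset.range H, ∑ i : Fin N, z k i * (ℓ i + r (u k i)) * Δt}
      (v 0 ⬝ᵥ z₀) :=
  kernel_hjb_dynamic_programming_general N m H Δt U hU_ne hU_cpt r hr ℓ Ahat Bhat hM_nonneg v hvH
    hvk z₀ hz₀
end

section
/- For all x₁, x₂, u ∈ ℝ, (1/2)x₂² + (1/2)u² + x₁·x₂ + x₂·( −x₁ − (1/2)x₂(1 − x₁²) + x₁·u ) = (1/2)·(u + x₁x₂)². Consequently, with value function V(x₁,x₂) = (1/2)(x₁² + x₂²), for the controlled Van der Pol system ẋ₁ = x₂, ẋ₂ = −x₁ − (1/2)x₂(1 − x₁²) + x₁u with stage cost ℓ(x,u) = (1/2)(x₂² + u²), the stationary Hamilton–Jacobi–Bellman relation min_{u ∈ ℝ} [ ℓ(x,u) + ⟨∇V(x), (ẋ₁, ẋ₂)⟩ ] = 0 holds at every (x₁,x₂) ∈ ℝ², the minimum being attained at the unique point u = −x₁x₂. -/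
open RealInnerProductSpace

/-! Since `V = ½‖x‖²` has gradient `x`, the Hamiltonian `ℓ(x,u) + ⟨∇V(x), ẋ⟩` is the polynomial
`½x₂² + ½u² + x₁x₂ + x₂(−x₁ − ½x₂(1 − x₁²) + x₁u)`, in which everything except `½u² + x₁x₂u + ½x₁²x₂²`
cancels: it is the perfect square `½(u + x₁x₂)²`, whose minimum `0` is attained only at
`u = −x₁x₂`. -/

theorem hasGradientAt_half_norm_sq {E : Type*} [NormedAddCommGroup E] [InnerProductSpace ℝ E]
    [CompleteSpace E] (x : E) : HasGradientAt (fun p : E => (1 / 2) * ‖p‖ ^ 2) x x := by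
  rw [hasGradientAt_iff_hasFDerivAt]
  refine ((hasStrictFDerivAt_norm_sq x).hasFDerivAt.const_mul (1 / 2)).congr_fderiv ?_
  ext y
  simp

theorem EuclideanSpace.norm_sq_fin_two (p : EuclideanSpace ℝ (Fin 2)) :
    ‖p‖ ^ 2 = p 0 ^ 2 + p 1 ^ 2 := by
  simp [EuclideanSpace.real_norm_sq_eq, Fin.sum_univ_two]

theorem EuclideanSpace.inner_toLp_fin_two (x : EuclideanSpace ℝ (Fin 2)) (a b : ℝ) :
    ⟪x, (WithLp.equiv 2 (Fin 2 → ℝ)).symm ![a, b]⟫ = x 0 * a + x 1 * b := by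
  simp [PiLp.inner_apply, Fin.sum_univ_two, mul_comm]

theorem gradient_half_sum_sq_fin_two (x : EuclideanSpace ℝ (Fin 2)) :
    gradient (fun p : EuclideanSpace ℝ (Fin 2) => (1 / 2) * (p 0 ^ 2 + p 1 ^ 2)) x = x := by
  simpa only [EuclideanSpace.norm_sq_fin_two] using (hasGradientAt_half_norm_sq x).gradient

theorem vanderpol_completed_square (x₁ x₂ u : ℝ) :
    (1 / 2) * x₂ ^ 2 + (1 / 2) * u ^ 2 + x₁ * x₂ +
        x₂ * (-x₁ - (1 / 2) * x₂ * (1 - x₁ ^ 2) + x₁ * u) =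
      (1 / 2) * (u + x₁ * x₂) ^ 2 := by
  ring

theorem isLeast_half_sq_add (c : ℝ) : IsLeast {y : ℝ | ∃ u : ℝ, y = (1 / 2) * (u + c) ^ 2} 0 :=
  ⟨⟨-c, by ring⟩, by rintro y ⟨u, rfl⟩; positivity⟩

theorem half_sq_add_eq_zero_iff (u c : ℝ) : (1 / 2) * (u + c) ^ 2 = 0 ↔ u = -c := by
  rw [mul_eq_zero, or_iff_right (by norm_num), sq_eq_zero_iff, add_eq_zero_iff_eq_neg]

/-- Verification of the ground-truth optimal feedback law `π*(x) = −x₁x₂` for the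
controlled Van der Pol system `ẋ₁ = x₂`, `ẋ₂ = −x₁ − (1/2)x₂(1 − x₁²) + x₁u` with
stage cost `ℓ(x,u) = (1/2)(x₂² + u²)` and value function `V(x) = (1/2)(x₁² + x₂²)`:
the completed-square identity holds, hence the stationary HJB relation
`min_u [ℓ(x,u) + ⟨∇V(x), (ẋ₁, ẋ₂)⟩] = 0` holds with unique minimizer `u = −x₁x₂`. -/
theorem vanderpol_hjb :
    (∀ x₁ x₂ u : ℝ,
      (1 / 2) * x₂ ^ 2 + (1 / 2) * u ^ 2 + x₁ * x₂ +
          x₂ * (-x₁ - (1 / 2) * x₂ * (1 - x₁ ^ 2) + x₁ * u) =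
        (1 / 2) * (u + x₁ * x₂) ^ 2) ∧
    ∀ x : EuclideanSpace ℝ (Fin 2),
      IsLeast {y : ℝ | ∃ u : ℝ,
        y = (1 / 2) * ((x 1) ^ 2 + u ^ 2) +
          ⟪gradient
              (fun p : EuclideanSpace ℝ (Fin 2) => (1 / 2) * ((p 0) ^ 2 + (p 1) ^ 2)) x,
            (WithLp.equiv 2 (Fin 2 → ℝ)).symm
              ![x 1, -(x 0) - (1 / 2) * (x 1) * (1 - (x 0) ^ 2) + (x 0) * u]⟫} 0 ∧
      ∀ u : ℝ,
        ((1 / 2) * ((x 1) ^ 2 + u ^ 2) +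
            ⟪gradient
                (fun p : EuclideanSpace ℝ (Fin 2) => (1 / 2) * ((p 0) ^ 2 + (p 1) ^ 2)) x,
              (WithLp.equiv 2 (Fin 2 → ℝ)).symm
                ![x 1, -(x 0) - (1 / 2) * (x 1) * (1 - (x 0) ^ 2) + (x 0) * u]⟫ = 0 ↔
          u = -(x 0 * x 1)) := by
  have hamiltonian_eq (x : EuclideanSpace ℝ (Fin 2)) (u : ℝ) :
      (1 / 2) * ((x 1) ^ 2 + u ^ 2) +
          ⟪gradient
              (fun p : EuclideanSpace ℝ (Fin 2) => (1 / 2) * ((p 0) ^ 2 + (p 1) ^ 2)) x,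
            (WithLp.equiv 2 (Fin 2 → ℝ)).symm
              ![x 1, -(x 0) - (1 / 2) * (x 1) * (1 - (x 0) ^ 2) + (x 0) * u]⟫ =
        (1 / 2) * (u + x 0 * x 1) ^ 2 := by
    rw [gradient_half_sum_sq_fin_two, EuclideanSpace.inner_toLp_fin_two,
      ← vanderpol_completed_square]
    ring
  refine ⟨vanderpol_completed_square, fun x => ⟨?_, fun u => ?_⟩⟩
  · simpa only [hamiltonian_eq] using isLeast_half_sq_add (x 0 * x 1)
  · rw [hamiltonian_eq, half_sq_add_eq_zero_iff]
end
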